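/- Let f : ℂ^n → ℂ be a function. Then the following are equivalent: (a) f is continuous and rational; (b) for every x ∈ ℂ^n and every prime ideal I of ℂ[X₁,…,X_n] with Krull dimension of ℂ[X₁,…,X_n]/I equal to 1 and x ∈ Z(I) = {y ∈ ℂ^n : P(y) = 0 for all P ∈ I}, there exists an open neighborhood U_x of x in ℂ^n such that the restriction of f to U_x ∩ Z(I) is continuous and there exist polynomials p, q ∈ ℂ[X₁,…,X_n] with q ∉ I satisfying f(y) = p(y)/q(y) for every y ∈ U_x ∩ Z(I) with q(y) ≠ 0. (Theorem 9.6 in the case of affine n-space.) -/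

import Mathlib

/-!
A continuous rational function `f = p / q` on `ℂⁿ` is a polynomial: `q f = p` holds everywhere
by density, and every prime factor of `q` vanishes only where `p` does, so it divides `p` by the
Nullstellensatz and can be cancelled. Polynomials are trivially arc-rational.

Conversely, every axis-parallel line is an irreducible curve with coordinate ring `ℂ[t]`, so an
arc-rational `f` is locally continuous rational along each such line. Since `ℂ` is connected the
local fractions glue to a single one, and `f` is a polynomial on every axis-parallel line. A
function that is separately polynomial in each variable is a polynomial (Baire category and
Lagrange interpolation, by induction on `n`).
-/

open MvPolynomial

/-- The set of complex points of the subvariety of affine `n`-space defined by an ideal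
`I` of the complex polynomial ring. -/
def complexPoints {n : ℕ} (I : Ideal (MvPolynomial (Fin n) ℂ)) : Set (Fin n → ℂ) :=
  {x | ∀ P ∈ I, eval x P = 0}

open Set Filter
open scoped Polynomial

theorem eqOn_of_forall_ne_zero_of_dense {X K : Type*} [TopologicalSpace X] [TopologicalSpace K]
    [T2Space K] [Zero K] {s u v : X → K} {V : Set X} (hV : IsOpen V)
    (hs : Dense {x | s x ≠ 0}) (hu : ContinuousOn u V) (hv : ContinuousOn v V)
    (h : ∀ x ∈ V, s x ≠ 0 → u x = v x) : EqOn u v V :=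
  EqOn.of_subset_closure (fun x hx => h x hx.1 hx.2) hu hv inter_subset_left
    (hs.open_subset_closure_inter hV)

section Descent

variable {R X K : Type*} [CommRing R] [UniqueFactorizationMonoid R]
  [TopologicalSpace X] [Field K] [TopologicalSpace K] [IsTopologicalRing K] [T2Space K]

/-- Each prime factor `s` of `q` divides `p`, and cancelling it preserves the identity because
`{x | ev x s ≠ 0}` is dense. -/
theorem UniqueFactorizationMonoid.exists_eq_of_continuous_of_mul_eq (ev : X → R →+* K)
    (continuous_ev : ∀ r, Continuous fun x => ev x r)
    (dense_ev_ne_zero : ∀ r ≠ 0, Dense {x | ev x r ≠ 0})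
    (dvd_of_ev_eq_zero : ∀ s r, Prime s → (∀ x, ev x s = 0 → ev x r = 0) → s ∣ r)
    {g : X → K} (hg : Continuous g) {p q : R} (hq : q ≠ 0) (h : ∀ x, ev x q * g x = ev x p) :
    ∃ P, ∀ x, g x = ev x P := by
  induction q using UniqueFactorizationMonoid.induction_on_prime generalizing p with
  | h₁ => exact absurd rfl hq
  | h₂ u hu =>
    obtain ⟨v, hv⟩ := hu.exists_right_inv
    refine ⟨v * p, fun x => ?_⟩
    rw [map_mul, ← h x, ← mul_assoc, ← map_mul, mul_comm v, hv, map_one, one_mul]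
  | h₃ a s ha hs ih =>
    obtain ⟨p', rfl⟩ := dvd_of_ev_eq_zero s p hs fun x hx => by
      rw [← h x, map_mul, hx, zero_mul, zero_mul]
    have cancel_s : (fun x => ev x a * g x) = fun x => ev x p' :=
      Continuous.ext_on (dense_ev_ne_zero s hs.ne_zero) ((continuous_ev a).mul hg)
        (continuous_ev p') fun y (hy : ev y s ≠ 0) =>
          mul_left_cancel₀ hy (by simpa only [map_mul, mul_assoc] using h y)
    exact ih ha (congrFun cancel_s)

end Descent

namespace MvPolynomial

variable {σ 𝕜 : Type*}

theorem dense_setOf_eval_ne_zero [Fintype σ] [NontriviallyNormedField 𝕜]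
    {g : MvPolynomial σ 𝕜} (hg : g ≠ 0) : Dense {x : σ → 𝕜 | eval x g ≠ 0} := by
  rw [← compl_ofPred, ← interior_eq_empty_iff_dense_compl, eq_empty_iff_forall_notMem]
  intro x hx
  obtain ⟨ε, hε, hball⟩ := Metric.mem_nhds_iff.1 (mem_interior_iff_mem_nhds.1 hx)
  refine hg ((funext_set_iff (s := fun i => Metric.ball (x i) ε) fun i =>
    infinite_of_mem_nhds (x i) (Metric.ball_mem_nhds _ hε)).2 fun y hy => ?_)
  rw [← ball_pi x hε] at hy
  simpa using hball hy

theorem dvd_of_forall_eval_eq_zero [Finite σ] [Field 𝕜] [IsAlgClosed 𝕜]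
    {s p : MvPolynomial σ 𝕜} (hs : Prime s) (h : ∀ x, eval x s = 0 → eval x p = 0) : s ∣ p := by
  have := (Ideal.span_singleton_prime hs.ne_zero).2 hs
  rw [← Ideal.mem_span_singleton, ← IsPrime.vanishingIdeal_zeroLocus (K := 𝕜) (Ideal.span {s})]
  simpa [zeroLocus_span] using h

theorem exists_eval_eq_of_continuous_of_eq_div [Fintype σ]
    [NontriviallyNormedField 𝕜] [IsAlgClosed 𝕜] {f : (σ → 𝕜) → 𝕜} (hf : Continuous f)
    {p q : MvPolynomial σ 𝕜} (hq : q ≠ 0) (h : ∀ x, eval x q ≠ 0 → f x = eval x p / eval x q) :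
    ∃ P : MvPolynomial σ 𝕜, ∀ x, f x = eval x P := by
  have hpq : (fun x => eval x q * f x) = fun x => eval x p :=
    Continuous.ext_on (dense_setOf_eval_ne_zero hq) ((continuous_eval q).mul hf)
      (continuous_eval p) fun x (hx : eval x q ≠ 0) => by rw [h x hx, mul_div_cancel₀ _ hx]
  exact UniqueFactorizationMonoid.exists_eq_of_continuous_of_mul_eq (R := MvPolynomial σ 𝕜) eval
    continuous_eval (fun _ => dense_setOf_eval_ne_zero) (fun _ _ => dvd_of_forall_eval_eq_zero)
    hf hq (congrFun hpq)

end MvPolynomial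

namespace Polynomial

variable {𝕜 : Type*}

theorem dense_setOf_eval_ne_zero [NontriviallyNormedField 𝕜] {g : 𝕜[X]} (hg : g ≠ 0) :
    Dense {t : 𝕜 | g.eval t ≠ 0} := by
  rw [← compl_ofPred, ← interior_eq_empty_iff_dense_compl, eq_empty_iff_forall_notMem]
  exact fun t ht =>
    infinite_of_mem_nhds t (mem_interior_iff_mem_nhds.1 ht) (finite_setOfPred_isRoot hg)

theorem dvd_of_forall_eval_eq_zero [Field 𝕜] [IsAlgClosed 𝕜] {s p : 𝕜[X]} (hs : Prime s)
    (h : ∀ t, s.eval t = 0 → p.eval t = 0) : s ∣ p := by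
  obtain ⟨c, hc⟩ := IsAlgClosed.exists_root s (degree_pos_of_irreducible hs.irreducible).ne'
  exact ((irreducible_X_sub_C c).dvd_symm hs.irreducible (dvd_iff_isRoot.2 hc)).trans
    (dvd_iff_isRoot.2 (h c hc))

/-- The local fractions `p t / q t` agree on overlaps, since open subsets of `𝕜` are infinite, so
they define a locally constant, hence constant, map to `RatFunc 𝕜`. -/
theorem exists_forall_mul_eq_of_locally [NontriviallyNormedField 𝕜] [PreconnectedSpace 𝕜]
    {g : 𝕜 → 𝕜} (hg : Continuous g)
    (h : ∀ t, ∃ V, IsOpen V ∧ t ∈ V ∧ ∃ p q : 𝕜[X], q ≠ 0 ∧ ∀ s ∈ V, q.eval s * g s = p.eval s) :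
    ∃ p q : 𝕜[X], q ≠ 0 ∧ ∀ s, q.eval s * g s = p.eval s := by
  choose V hV hmem p q hq hpq using h
  have overlap : ∀ t, ∀ s ∈ V t, p s * q t = p t * q s := by
    intro t s hs
    refine eq_of_infinite_eval_eq _ _ <| (infinite_of_mem_nhds s
      (inter_mem ((hV s).mem_nhds (hmem s)) ((hV t).mem_nhds hs))).mono ?_
    rintro u ⟨hus, hut⟩
    simp only [mem_ofPred_eq, eval_mul, ← hpq s u hus, ← hpq t u hut]
    ring
  have hconst : IsLocallyConstant fun t => RatFunc.mk (p t) (q t) :=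
    (IsLocallyConstant.iff_eventually_eq _).2 fun t => by
      filter_upwards [(hV t).mem_nhds (hmem t)] with s hs
      exact (RatFunc.mk_eq_mk (hq s) (hq t)).2 (overlap t s hs)
  refine ⟨p 0, q 0, hq 0, fun s => ?_⟩
  have hs0 := (RatFunc.mk_eq_mk (hq s) (hq 0)).1 (hconst.apply_eq_of_preconnectedSpace s 0)
  refine eqOn_of_forall_ne_zero_of_dense (s := fun u => (q s).eval u)
    (u := fun u => (q 0).eval u * g u) (hV s)
    (dense_setOf_eval_ne_zero (hq s)) ((q 0).continuous.mul hg).continuousOn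
    (p 0).continuous.continuousOn (fun u hu hqu => mul_left_cancel₀ hqu ?_) (hmem s)
  have hs0u := congrArg (eval u) hs0
  simp only [eval_mul] at hs0u
  linear_combination (q 0).eval u * hpq s u hu + hs0u

theorem exists_eval_eq_of_locally_rational [NontriviallyNormedField 𝕜] [IsAlgClosed 𝕜]
    [PreconnectedSpace 𝕜] {g : 𝕜 → 𝕜}
    (h : ∀ t, ∃ V, IsOpen V ∧ t ∈ V ∧ ContinuousOn g V ∧ ∃ p q : 𝕜[X], q ≠ 0 ∧
      ∀ s ∈ V, q.eval s ≠ 0 → g s = p.eval s / q.eval s) :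
    ∃ P : 𝕜[X], ∀ t, g t = P.eval t := by
  have hg : Continuous g := continuous_iff_continuousAt.2 fun t => by
    obtain ⟨V, hV, ht, hgV, -⟩ := h t
    exact hgV.continuousAt (hV.mem_nhds ht)
  obtain ⟨p, q, hq, hpq⟩ := exists_forall_mul_eq_of_locally hg fun t => by
    obtain ⟨V, hV, ht, hgV, p, q, hq, hpq⟩ := h t
    refine ⟨V, hV, ht, p, q, hq, eqOn_of_forall_ne_zero_of_dense (s := fun s => q.eval s) hV
      (dense_setOf_eval_ne_zero hq) (q.continuous.continuousOn.mul hgV)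
      p.continuous.continuousOn fun s hs hqs => ?_⟩
    rw [hpq s hs hqs, mul_div_cancel₀ _ hqs]
  exact UniqueFactorizationMonoid.exists_eq_of_continuous_of_mul_eq evalRingHom
    (fun r => r.continuous) (fun _ => dense_setOf_eval_ne_zero)
    (fun _ _ => dvd_of_forall_eval_eq_zero) hg hq hpq

end Polynomial

theorem Lagrange.eval_eq_sum_eval_mul_eval_basis {F ι : Type*} [Field F] [Fintype ι]
    [DecidableEq ι] {v : ι → F} (hv : Function.Injective v) {G : F[X]}
    (hG : G.degree < Fintype.card ι) (t : F) :
    G.eval t = ∑ i, G.eval (v i) * (Lagrange.basis Finset.univ v i).eval t := by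
  conv_lhs => rw [Lagrange.eq_interpolate (f := G) hv.injOn (by rwa [Finset.card_univ])]
  simp [Lagrange.interpolate_apply, Polynomial.eval_finsetSum]

namespace MvPolynomial

variable {𝕜 : Type*} [NontriviallyNormedField 𝕜] [CompleteSpace 𝕜]

theorem exists_vanishingIdeal_eq_bot_of_iUnion_eq_univ {σ : Type*} [Fintype σ]
    {A : ℕ → Set (σ → 𝕜)} (hA : ⋃ d, A d = univ) : ∃ d, vanishingIdeal 𝕜 (A d) = ⊥ := by
  by_contra! hA_ne
  choose g hg hg0 using fun d => Submodule.exists_mem_ne_zero_of_ne_bot (hA_ne d)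
  have hcover : ⋃ d, {x | eval x (g d) = 0} = univ :=
    eq_univ_of_univ_subset <| hA ▸ iUnion_mono fun d x hx => by simpa using hg d x hx
  obtain ⟨d, hd⟩ := nonempty_interior_of_iUnion_of_closed
    (fun d => isClosed_eq (continuous_eval (g d)) continuous_const) hcover
  exact hd.ne_empty <| interior_eq_empty_iff_dense_compl.2 <|
    (dense_setOf_eval_ne_zero (hg0 d)).mono fun x hx => hx

/-- By Baire, for some `d` the points `x` whose row `F x` has degree `≤ d` lie on no
hypersurface. Interpolating each such row at `d + 1` nodes writes `F x t` as
`∑ j, Q_j(x) L_j(t)` there, hence everywhere, since `x ↦ F x t` is a polynomial. -/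
theorem exists_eval_cons_eq {n : ℕ} {F : (Fin n → 𝕜) → 𝕜 → 𝕜}
    (hrow : ∀ x, ∃ G : 𝕜[X], ∀ t, F x t = G.eval t)
    (hcol : ∀ t, ∃ Q : MvPolynomial (Fin n) 𝕜, ∀ x, F x t = eval x Q) :
    ∃ P : MvPolynomial (Fin (n + 1)) 𝕜, ∀ x t, F x t = eval (Fin.cons t x) P := by
  obtain ⟨d, hd⟩ := exists_vanishingIdeal_eq_bot_of_iUnion_eq_univ
    (A := fun d => {x | ∃ G : 𝕜[X], G.natDegree ≤ d ∧ ∀ t, F x t = G.eval t})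
    (eq_univ_of_forall fun x => by
      obtain ⟨G, hG⟩ := hrow x
      exact mem_iUnion.2 ⟨G.natDegree, G, le_rfl, hG⟩)
  choose Q hQ using hcol
  set v : Fin (d + 1) → 𝕜 := fun j => Infinite.natEmbedding 𝕜 j
  have hv : Function.Injective v := (Infinite.natEmbedding 𝕜).injective.comp Fin.val_injective
  set L := Lagrange.basis Finset.univ v
  have interpolate : ∀ x t, F x t = ∑ j, eval x (Q (v j)) * (L j).eval t := by
    intro x t
    have hQt : Q t = ∑ j, Q (v j) * C ((L j).eval t) := by
      rw [← sub_eq_zero, ← Ideal.mem_bot, ← hd]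
      rintro y ⟨G, hGd, hG⟩
      have hGdeg : G.degree < Fintype.card (Fin (d + 1)) :=
        G.degree_le_natDegree.trans_lt <| by
          rw [Fintype.card_fin]; exact_mod_cast Nat.lt_succ_of_le hGd
      simp [← hQ, hG, Lagrange.eval_eq_sum_eval_mul_eval_basis hv hGdeg t, L]
    rw [hQ, hQt]
    simp
  refine ⟨(finSuccEquiv 𝕜 n).symm (∑ j, Polynomial.C (Q (v j)) * (L j).map C), fun x t => ?_⟩
  rw [eval_eq_eval_mv_eval', AlgEquiv.apply_symm_apply, interpolate]
  simp only [Polynomial.map_sum, Polynomial.map_mul, Polynomial.map_C, Polynomial.map_map,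
    Polynomial.eval_finsetSum, Polynomial.eval_mul, Polynomial.eval_C,
    show (eval x).comp C = RingHom.id 𝕜 from RingHom.ext eval_C, Polynomial.map_id]

theorem exists_eval_eq_of_forall_update {n : ℕ} {f : (Fin n → 𝕜) → 𝕜}
    (hf : ∀ (a : Fin n → 𝕜) (i : Fin n), ∃ G : 𝕜[X], ∀ t, f (Function.update a i t) = G.eval t) :
    ∃ P : MvPolynomial (Fin n) 𝕜, ∀ x, f x = eval x P := by
  induction n with
  | zero => exact ⟨C (f 0), fun x => by rw [Subsingleton.elim x 0, eval_C]⟩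
  | succ n ih =>
    obtain ⟨P, hP⟩ := exists_eval_cons_eq (F := fun x t => f (Fin.cons t x))
      (fun x => by simpa only [Fin.update_cons_zero] using hf (Fin.cons 0 x) 0)
      (fun t => ih fun a i => by simpa only [Fin.cons_update] using hf (Fin.cons t a) i.succ)
    exact ⟨P, fun x => by simpa only [Fin.cons_self_tail] using hP (Fin.tail x) (x 0)⟩

section AxisLine

variable {σ K : Type*} [DecidableEq σ] [Field K] (a : σ → K) (i : σ)

noncomputable def axisLineHom : MvPolynomial σ K →ₐ[K] K[X] :=
  aeval (Function.update (fun j => Polynomial.C (a j)) i Polynomial.X)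

theorem eval_axisLineHom (g : MvPolynomial σ K) (t : K) :
    (axisLineHom a i g).eval t = eval (Function.update a i t) g := by
  have hcomp : (Polynomial.aeval t).comp (axisLineHom a i) = aeval (Function.update a i t) :=
    algHom_ext fun j => by rcases eq_or_ne j i with rfl | hj <;> simp [axisLineHom, *]
  simpa using DFunLike.congr_fun hcomp g

theorem axisLineHom_surjective : Function.Surjective (axisLineHom a i) := fun h =>
  ⟨Polynomial.aeval (X i) h, by
    rw [← Polynomial.aeval_algHom_apply, axisLineHom, aeval_X, Function.update_self,
      Polynomial.aeval_X_left_apply]⟩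

theorem ringKrullDim_quotient_ker_axisLineHom :
    ringKrullDim (MvPolynomial σ K ⧸ RingHom.ker (axisLineHom a i)) = 1 := by
  rw [ringKrullDim_eq_of_ringEquiv
    (Ideal.quotientKerAlgEquivOfSurjective (axisLineHom_surjective a i)).toRingEquiv]
  exact IsPrincipalIdealRing.ringKrullDim_eq_one _ (Polynomial.not_isField K)

end AxisLine

end MvPolynomial

theorem update_mem_complexPoints_ker_axisLineHom {n : ℕ} (a : Fin n → ℂ) (i : Fin n) (t : ℂ) :
    Function.update a i t ∈ complexPoints (RingHom.ker (axisLineHom a i)) := fun P hP => by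
  rw [← eval_axisLineHom, RingHom.mem_ker.1 hP, Polynomial.eval_zero]

def IsArcRational {n : ℕ} (f : (Fin n → ℂ) → ℂ) : Prop :=
  ∀ x : Fin n → ℂ, ∀ I : Ideal (MvPolynomial (Fin n) ℂ), I.IsPrime →
    ringKrullDim (MvPolynomial (Fin n) ℂ ⧸ I) = 1 → x ∈ complexPoints I →
    ∃ Ux : Set (Fin n → ℂ), IsOpen Ux ∧ x ∈ Ux ∧
      ContinuousOn f (Ux ∩ complexPoints I) ∧
      ∃ p q : MvPolynomial (Fin n) ℂ, q ∉ I ∧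
        ∀ y ∈ Ux ∩ complexPoints I, eval y q ≠ 0 → f y = eval y p / eval y q

theorem isArcRational_eval {n : ℕ} (P : MvPolynomial (Fin n) ℂ) :
    IsArcRational fun x => eval x P := fun _ I hI _ _ =>
  ⟨univ, isOpen_univ, mem_univ _, (continuous_eval P).continuousOn, P, 1,
    fun h1 => hI.ne_top ((Ideal.eq_top_iff_one I).2 h1), fun y _ _ => by rw [map_one, div_one]⟩

theorem IsArcRational.exists_eval_eq {n : ℕ} {f : (Fin n → ℂ) → ℂ} (hf : IsArcRational f) :
    ∃ P : MvPolynomial (Fin n) ℂ, ∀ x, f x = eval x P := by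
  refine exists_eval_eq_of_forall_update fun a i =>
    Polynomial.exists_eval_eq_of_locally_rational fun t₀ => ?_
  have hline : Continuous fun t => Function.update a i t := continuous_const.update i continuous_id
  have hmem := update_mem_complexPoints_ker_axisLineHom a i
  obtain ⟨U, hU, ht₀U, hfU, p, q, hq, hpq⟩ := hf _ _ (RingHom.ker_isPrime _)
    (ringKrullDim_quotient_ker_axisLineHom a i) (hmem t₀)
  refine ⟨(fun t => Function.update a i t) ⁻¹' U, hU.preimage hline, ht₀U,
    hfU.comp hline.continuousOn fun t ht => ⟨ht, hmem t⟩, axisLineHom a i p, axisLineHom a i q,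
    mt RingHom.mem_ker.2 hq, fun t ht hqt => ?_⟩
  rw [eval_axisLineHom] at hqt
  rw [eval_axisLineHom, eval_axisLineHom]
  exact hpq _ ⟨ht, hmem t⟩ hqt

/-- **Theorem 9.6** (case of affine `n`-space). A function `f : ℂⁿ → ℂ` is continuous
and rational if and only if it is arc-rational: for every point `x` and every
irreducible complex algebraic curve through `x` (encoded by a prime ideal `I` with
one-dimensional quotient), `f` is continuous rational on the curve near `x`. -/
theorem continuous_rational_iff_arcRational_complex
    (n : ℕ) (f : (Fin n → ℂ) → ℂ) :
    (Continuous f ∧ ∃ p q : MvPolynomial (Fin n) ℂ, q ≠ 0 ∧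
      ∀ x : Fin n → ℂ, eval x q ≠ 0 → f x = eval x p / eval x q) ↔
    (∀ x : Fin n → ℂ, ∀ I : Ideal (MvPolynomial (Fin n) ℂ), I.IsPrime →
      ringKrullDim (MvPolynomial (Fin n) ℂ ⧸ I) = 1 → x ∈ complexPoints I →
      ∃ Ux : Set (Fin n → ℂ), IsOpen Ux ∧ x ∈ Ux ∧
        ContinuousOn f (Ux ∩ complexPoints I) ∧
        ∃ p q : MvPolynomial (Fin n) ℂ, q ∉ I ∧
          ∀ y ∈ Ux ∩ complexPoints I, eval y q ≠ 0 → f y = eval y p / eval y q) := by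
  change _ ↔ IsArcRational f
  constructor
  · rintro ⟨hf, p, q, hq, hpq⟩
    obtain ⟨P, hP⟩ := exists_eval_eq_of_continuous_of_eq_div hf hq hpq
    rw [funext hP]
    exact isArcRational_eval P
  · intro hf
    obtain ⟨P, hP⟩ := hf.exists_eval_eq
    rw [funext hP]
    exact ⟨continuous_eval P, P, 1, one_ne_zero, fun x _ => by rw [map_one, div_one]⟩
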